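/- arXiv:2404.08512 — 4 statements merged into one kernel-verified Lean document; each statement's English description precedes it below -/
import Mathlib

section
/- Let 0 < ρ < R and let f be holomorphic and bounded on D_R with Taylor coefficients (f_n) at 0. Then for every N ∈ ℕ₀, (∑_{n≥N} |f_n|² ρ^{2n})^{1/2} ≤ (ρ/R)^N · sup_{z∈D_R} |f(z)|; that is, ‖f − 𝒫_N f‖_{H²(D_ρ)} ≤ (ρ/R)^N ‖f‖_{H^∞(D_R)}. -/
open Metric MeasureTheory Complex Filter

noncomputable section HardyAux

namespace HardyAux

instance fact2pi : Fact (0 < 2 * Real.pi) := ⟨by positivity⟩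

lemma fourier_nat_eq_pow {T : ℝ} (k : ℕ) (x : AddCircle T) :
    (fourier (k : ℤ) x : ℂ) = (x.toCircle : ℂ) ^ k := by
  induction k with
  | zero => simp [fourier_apply]
  | succ k ih =>
    have h : (((k + 1 : ℕ) : ℤ)) • x = ((k : ℤ)) • x + x := by
      push_cast
      rw [add_smul, one_smul]
    rw [fourier_apply, h, AddCircle.toCircle_add, Circle.coe_mul, ← fourier_apply, ih, pow_succ]

lemma parseval_disk_bound {R : ℝ} (f : ℂ → ℂ) (a : ℕ → ℂ) {M : ℝ}
    (hf : ∀ z ∈ ball (0 : ℂ) R, HasSum (fun n => a n * z ^ n) (f z))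
    (hM : ∀ z ∈ ball (0 : ℂ) R, ‖f z‖ ≤ M)
    {r : ℝ} (hr : 0 < r) (hrR : r < R) :
    Summable (fun n : ℕ => ‖a n‖ ^ 2 * r ^ (2 * n)) ∧
      ∑' n : ℕ, ‖a n‖ ^ 2 * r ^ (2 * n) ≤ M ^ 2 := by
  set c : ℕ → ℂ := fun k => a k * (r : ℂ) ^ k with hc_def
  have hcnorm : ∀ k, ‖c k‖ = ‖a k‖ * r ^ k := by
    intro k
    simp [hc_def, norm_mul, norm_pow, Complex.norm_real, abs_of_pos hr]
  -- summability of ∑ ‖c k‖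
  have hc : Summable (fun k => ‖c k‖) := by
    obtain ⟨r', hrr', hr'R⟩ : ∃ r' : ℝ, r < r' ∧ r' < R :=
      ⟨(r + R) / 2, by constructor <;> linarith⟩
    have hr'0 : 0 < r' := hr.trans hrr'
    have hz' : ((r' : ℂ)) ∈ ball (0 : ℂ) R := by
      simp only [mem_ball, dist_zero_right, Complex.norm_real, Real.norm_eq_abs,
        abs_of_pos hr'0]
      exact hr'R
    have hsum' := (hf _ hz').summable
    have htend : Tendsto (fun k => ‖a k * (r' : ℂ) ^ k‖) atTop (nhds 0) := by
      simpa using hsum'.tendsto_atTop_zero.norm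
    obtain ⟨C, hC⟩ := htend.bddAbove_range
    have hC' : ∀ k, ‖a k * (r' : ℂ) ^ k‖ ≤ C := fun k => hC ⟨k, rfl⟩
    have hnorm' : ∀ k, ‖a k * (r' : ℂ) ^ k‖ = ‖a k‖ * r' ^ k := by
      intro k
      simp [norm_mul, norm_pow, Complex.norm_real, abs_of_pos hr'0]
    refine Summable.of_nonneg_of_le (fun k => norm_nonneg _)
      (fun k => ?_) (Summable.mul_left C
        (summable_geometric_of_lt_one (by positivity) ((div_lt_one hr'0).mpr hrr')))
    have hxy : r ^ k = r' ^ k * (r / r') ^ k := by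
      rw [← mul_pow, mul_div_cancel₀ _ hr'0.ne']
    calc ‖c k‖ = ‖a k * (r' : ℂ) ^ k‖ * (r / r') ^ k := by
          rw [hcnorm, hnorm' k, hxy]; ring
      _ ≤ C * (r / r') ^ k :=
          mul_le_mul_of_nonneg_right (hC' k) (by positivity)
  -- the boundary function as a continuous map on the circle
  have hsmul : Summable (fun k : ℕ => c k • fourier (T := 2 * Real.pi) (k : ℤ)) := by
    refine Summable.of_norm ?_
    simpa [norm_smul, fourier_norm] using hc
  set G : C(AddCircle (2 * Real.pi), ℂ) := ∑' k : ℕ, c k • fourier (k : ℤ) with hG_def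
  have hG : HasSum (fun k : ℕ => c k • fourier (T := 2 * Real.pi) (k : ℤ)) G := hsmul.hasSum
  have hGx : ∀ x : AddCircle (2 * Real.pi), G x = f ((r : ℂ) * x.toCircle) := by
    intro x
    have hz : ((r : ℂ) * x.toCircle) ∈ ball (0 : ℂ) R := by
      simp only [mem_ball, dist_zero_right, norm_mul, Complex.norm_real, Real.norm_eq_abs,
        abs_of_pos hr]
      rw [Circle.norm_coe, mul_one]
      exact hrR
    have h2 := hf _ hz
    have heq : (fun k : ℕ => a k * ((r : ℂ) * x.toCircle) ^ k)
        = fun k : ℕ => c k * fourier (k : ℤ) x := by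
      funext k
      rw [mul_pow, fourier_nat_eq_pow, hc_def]
      ring
    rw [heq] at h2
    have h1 : HasSum (fun k : ℕ => c k * fourier (k : ℤ) x) (G x) := by
      have := (ContinuousMap.evalCLM ℂ x).hasSum hG
      simpa using this
    exact h1.unique h2
  have hGbound : ∀ x : AddCircle (2 * Real.pi), ‖G x‖ ≤ M := by
    intro x
    rw [hGx x]
    refine hM _ ?_
    simp only [mem_ball, dist_zero_right, norm_mul, Complex.norm_real, Real.norm_eq_abs,
      abs_of_pos hr]
    rw [Circle.norm_coe, mul_one]
    exact hrR
  set Gp := ContinuousMap.toLp (E := ℂ) 2 AddCircle.haarAddCircle ℂ G with hGp_def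
  -- Fourier coefficients of G at nonnegative indices
  have hcoeff : ∀ n : ℕ, fourierCoeff (⇑G) (n : ℤ) = c n := by
    intro n
    have hLp : HasSum (fun k : ℕ => c k • fourierLp (T := 2 * Real.pi) 2 (k : ℤ)) Gp := by
      have := (ContinuousMap.toLp (E := ℂ) 2 AddCircle.haarAddCircle ℂ).hasSum hG
      simpa [_root_.map_smul] using this
    have hinner := (innerSL ℂ (fourierLp (T := 2 * Real.pi) 2 (n : ℤ))).hasSum hLp
    have horth := orthonormal_iff_ite.mp (orthonormal_fourier (T := 2 * Real.pi))
    have hterm : (fun k : ℕ =>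
        (innerSL ℂ (fourierLp (T := 2 * Real.pi) 2 (n : ℤ))) (c k • fourierLp 2 (k : ℤ)))
        = fun k : ℕ => if k = n then c n else 0 := by
      funext k
      simp only [innerSL_apply_apply, inner_smul_right, horth]
      by_cases h : k = n
      · simp [h]
      · have : ¬ ((n : ℤ) = (k : ℤ)) := by
          simpa using fun hh => h (by exact_mod_cast hh.symm)
        simp [h, this]
    rw [hterm] at hinner
    have : (innerSL ℂ (fourierLp (T := 2 * Real.pi) 2 (n : ℤ))) Gp = c n :=
      hinner.unique (hasSum_ite_eq n (c n))
    have hrepr : fourierCoeff (⇑G) (n : ℤ) =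
        (innerSL ℂ (fourierLp (T := 2 * Real.pi) 2 (n : ℤ))) Gp := by
      rw [← fourierCoeff_toLp, ← fourierBasis_repr]
      rw [HilbertBasis.repr_apply_apply, coe_fourierBasis]
      simp [innerSL_apply_apply, hGp_def]
    rw [hrepr, this]
  -- Parseval and the bound
  have hpars := tsum_sq_fourierCoeff Gp
  have hGpcoe : ∀ i : ℤ, fourierCoeff (↑↑Gp : AddCircle (2 * Real.pi) → ℂ) i
      = fourierCoeff (⇑G) i := fun i => fourierCoeff_toLp G i
  have hint : ∫ t : AddCircle (2 * Real.pi), ‖(↑↑Gp : AddCircle (2 * Real.pi) → ℂ) t‖ ^ 2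
      ∂AddCircle.haarAddCircle ≤ M ^ 2 := by
    have hae : (↑↑Gp : AddCircle (2 * Real.pi) → ℂ)
        =ᵐ[AddCircle.haarAddCircle] ⇑G := ContinuousMap.coeFn_toLp _ _
    have hMnn : 0 ≤ M := le_trans (norm_nonneg _) (hGbound 0)
    calc ∫ t, ‖(↑↑Gp : AddCircle (2 * Real.pi) → ℂ) t‖ ^ 2 ∂AddCircle.haarAddCircle
        ≤ ‖∫ t, ‖(↑↑Gp : AddCircle (2 * Real.pi) → ℂ) t‖ ^ 2 ∂AddCircle.haarAddCircle‖ :=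
          le_abs_self _
      _ ≤ M ^ 2 * (AddCircle.haarAddCircle (Set.univ : Set (AddCircle (2 * Real.pi)))).toReal := by
          refine norm_integral_le_of_norm_le_const ?_
          filter_upwards [hae] with t ht
          rw [ht, Real.norm_eq_abs, _root_.abs_of_nonneg (pow_nonneg (norm_nonneg (G t)) 2)]
          exact pow_le_pow_left₀ (norm_nonneg _) (hGbound t) 2
      _ = M ^ 2 := by simp
  have hZsummable : Summable (fun i : ℤ => ‖fourierCoeff (⇑G) i‖ ^ 2) := by
    have h := lp.memℓp (fourierBasis.repr Gp)
    rw [memℓp_gen_iff (by norm_num)] at h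
    refine h.congr fun i => ?_
    rw [fourierBasis_repr, hGpcoe i]
    norm_num
  have hterm_eq : ∀ n : ℕ, ‖a n‖ ^ 2 * r ^ (2 * n) = ‖fourierCoeff (⇑G) (n : ℤ)‖ ^ 2 := by
    intro n
    rw [hcoeff n, hcnorm n, mul_pow, ← pow_mul, Nat.mul_comm n 2]
  have hNsummable : Summable (fun n : ℕ => ‖a n‖ ^ 2 * r ^ (2 * n)) := by
    have := hZsummable.comp_injective ((Nat.cast_injective : Function.Injective ((↑) : ℕ → ℤ)))
    exact this.congr fun n => (hterm_eq n).symm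
  refine ⟨hNsummable, ?_⟩
  calc ∑' n : ℕ, ‖a n‖ ^ 2 * r ^ (2 * n)
      ≤ ∑' i : ℤ, ‖fourierCoeff (⇑G) i‖ ^ 2 := by
        refine Summable.tsum_le_tsum_of_inj ((↑) : ℕ → ℤ) (Nat.cast_injective : Function.Injective ((↑) : ℕ → ℤ))
          (fun i _ => by positivity) (fun n => le_of_eq (hterm_eq n)) hNsummable hZsummable
    _ = ∫ t : AddCircle (2 * Real.pi), ‖(↑↑Gp : AddCircle (2 * Real.pi) → ℂ) t‖ ^ 2
        ∂AddCircle.haarAddCircle := by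
        rw [← hpars]
        exact tsum_congr fun i => by rw [hGpcoe i]
    _ ≤ M ^ 2 := hint

end HardyAux

open Metric
open MeasureTheory Complex Filter HardyAux

/-- Taylor-tail bound in the Hardy norm on a smaller disk for a bounded
holomorphic function (Lemma 2 of the paper):
`‖f − 𝒫_N f‖_{H²(D_ρ)} ≤ (ρ/R)^N ‖f‖_{H^∞(D_R)}`. -/
theorem hardy_tail_bound_of_bounded_holomorphic
    (ρ R : ℝ) (hρ : 0 < ρ) (hρR : ρ < R)
    (f : ℂ → ℂ) (a : ℕ → ℂ)
    (hdiff : DifferentiableOn ℂ f (ball (0 : ℂ) R))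
    (hf : ∀ z ∈ ball (0 : ℂ) R, HasSum (fun n => a n * z ^ n) (f z))
    (hbdd : BddAbove ((fun z => ‖f z‖) '' ball (0 : ℂ) R)) :
    ∀ N : ℕ,
      Real.sqrt (∑' n : ℕ, ‖a (N + n)‖ ^ 2 * ρ ^ (2 * (N + n))) ≤
        (ρ / R) ^ N * sSup ((fun z => ‖f z‖) '' ball (0 : ℂ) R) := by
  intro N
  set M : ℝ := sSup ((fun z => ‖f z‖) '' ball (0 : ℂ) R) with hM_def
  have hMle : ∀ z ∈ ball (0 : ℂ) R, ‖f z‖ ≤ M := fun z hz => le_csSup hbdd ⟨z, hz, rfl⟩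
  have h0mem : (0 : ℂ) ∈ ball (0 : ℂ) R := by
    simp [mem_ball, hρ.trans hρR]
  have hM0 : 0 ≤ M := le_trans (norm_nonneg (f 0)) (hMle 0 h0mem)
  have hSρ := (parseval_disk_bound f a hf hMle hρ hρR).1
  have hTail : Summable (fun n : ℕ => ‖a (N + n)‖ ^ 2 * ρ ^ (2 * (N + n))) := by
    have := (summable_nat_add_iff (f := fun n : ℕ => ‖a n‖ ^ 2 * ρ ^ (2 * n)) N).mpr hSρ
    exact this.congr fun n => by rw [Nat.add_comm]
  have key : ∀ r ∈ Set.Ioo ρ R,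
      Real.sqrt (∑' n : ℕ, ‖a (N + n)‖ ^ 2 * ρ ^ (2 * (N + n))) ≤ (ρ / r) ^ N * M := by
    intro r hrm
    obtain ⟨hρr, hrR⟩ := hrm
    have hr0 : 0 < r := hρ.trans hρr
    obtain ⟨hSr, hBr⟩ := parseval_disk_bound f a hf hMle hr0 hrR
    have hshift : Summable (fun n : ℕ => ‖a (N + n)‖ ^ 2 * r ^ (2 * (N + n))) := by
      have := (summable_nat_add_iff (f := fun n : ℕ => ‖a n‖ ^ 2 * r ^ (2 * n)) N).mpr hSr
      exact this.congr fun n => by rw [Nat.add_comm]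
    have hpt : ∀ n : ℕ, ‖a (N + n)‖ ^ 2 * ρ ^ (2 * (N + n)) ≤
        (ρ / r) ^ (2 * N) * (‖a (N + n)‖ ^ 2 * r ^ (2 * (N + n))) := by
      intro n
      have hρpow : ρ ^ (2 * (N + n)) = (ρ / r) ^ (2 * (N + n)) * r ^ (2 * (N + n)) := by
        rw [← mul_pow, div_mul_cancel₀ _ hr0.ne']
      have hpow_le : (ρ / r) ^ (2 * (N + n)) ≤ (ρ / r) ^ (2 * N) :=
        pow_le_pow_of_le_one (by positivity) (by rw [div_le_one hr0]; exact hρr.le)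
          (by omega)
      calc ‖a (N + n)‖ ^ 2 * ρ ^ (2 * (N + n))
          = (ρ / r) ^ (2 * (N + n)) * (‖a (N + n)‖ ^ 2 * r ^ (2 * (N + n))) := by
            rw [hρpow]; ring
        _ ≤ (ρ / r) ^ (2 * N) * (‖a (N + n)‖ ^ 2 * r ^ (2 * (N + n))) :=
            mul_le_mul_of_nonneg_right hpow_le (by positivity)
    have step1 : (∑' n : ℕ, ‖a (N + n)‖ ^ 2 * ρ ^ (2 * (N + n))) ≤
        (ρ / r) ^ (2 * N) * ∑' n : ℕ, ‖a (N + n)‖ ^ 2 * r ^ (2 * (N + n)) := by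
      rw [← tsum_mul_left]
      exact Summable.tsum_le_tsum hpt hTail (hshift.mul_left _)
    have step2 : (∑' n : ℕ, ‖a (N + n)‖ ^ 2 * r ^ (2 * (N + n))) ≤
        ∑' n : ℕ, ‖a n‖ ^ 2 * r ^ (2 * n) :=
      Summable.tsum_le_tsum_of_inj (fun n => N + n) (add_right_injective N)
        (fun i _ => by positivity) (fun n => le_rfl) hshift hSr
    have hfinal : (∑' n : ℕ, ‖a (N + n)‖ ^ 2 * ρ ^ (2 * (N + n))) ≤ ((ρ / r) ^ N * M) ^ 2 := by
      have h2 : ((ρ / r) ^ N * M) ^ 2 = (ρ / r) ^ (2 * N) * M ^ 2 := by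
        rw [mul_pow, ← pow_mul, Nat.mul_comm N 2]
      rw [h2]
      calc (∑' n : ℕ, ‖a (N + n)‖ ^ 2 * ρ ^ (2 * (N + n)))
          ≤ (ρ / r) ^ (2 * N) * ∑' n : ℕ, ‖a (N + n)‖ ^ 2 * r ^ (2 * (N + n)) := step1
        _ ≤ (ρ / r) ^ (2 * N) * ∑' n : ℕ, ‖a n‖ ^ 2 * r ^ (2 * n) :=
            mul_le_mul_of_nonneg_left step2 (by positivity)
        _ ≤ (ρ / r) ^ (2 * N) * M ^ 2 :=
            mul_le_mul_of_nonneg_left hBr (by positivity)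
    calc Real.sqrt (∑' n : ℕ, ‖a (N + n)‖ ^ 2 * ρ ^ (2 * (N + n)))
        ≤ Real.sqrt (((ρ / r) ^ N * M) ^ 2) := Real.sqrt_le_sqrt hfinal
      _ = (ρ / r) ^ N * M := Real.sqrt_sq (by positivity)
  have hR0 : (0 : ℝ) < R := hρ.trans hρR
  have hlim : Tendsto (fun r : ℝ => (ρ / r) ^ N * M) (nhdsWithin R (Set.Iio R))
      (nhds ((ρ / R) ^ N * M)) := by
    have hcont : ContinuousAt (fun r : ℝ => (ρ / r) ^ N * M) R := by
      exact ((continuousAt_const.div continuousAt_id hR0.ne').pow N).mul continuousAt_const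
    exact hcont.continuousWithinAt.tendsto
  have hev : ∀ᶠ r in nhdsWithin R (Set.Iio R),
      Real.sqrt (∑' n : ℕ, ‖a (N + n)‖ ^ 2 * ρ ^ (2 * (N + n))) ≤ (ρ / r) ^ N * M :=
    eventually_of_mem (Ioo_mem_nhdsLT_of_mem ⟨hρR, le_refl R⟩) key
  exact ge_of_tendsto hlim hev
end HardyAux
end

section
/- Let a < b, let S = {s_1 < s_2 < … < s_d} ⊆ [a,b], and let f : [a,b] → ℝ be Lebesgue integrable with |f(x)| ≤ K for all x ∈ [a,b], such that f is differentiable at every point of [a,b]∖S (continuous and one-sided differentiable at a, b) with |f'(x)| ≤ K' for all x ∈ [a,b]∖S. Let M ∈ ℕ, h = (b−a)/M, x_k = a + k·h for k = 0,…,M, and choose tags t_k ∈ [x_{k−1}, x_k]∖S for k = 1,…,M. Then |∫_a^b f(x) dx − ∑_{k=1}^M f(t_k)·h| ≤ (1/2)·K'·(b−a)²/M + 2·d·K·(b−a)/M. -/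
set_option maxHeartbeats 1000000

private lemma half_mul_le_aux {K' X Y : ℝ} (h0 : 0 ≤ K') (hXY : X ≤ Y) :
    K' * X / 2 ≤ K' * Y / 2 := by
  have := mul_le_mul_of_nonneg_left hXY h0
  linarith

/-- Riemann-sum error bound for a piecewise `C¹` function with exceptional set `S`
(Lemma 5 of the paper). -/
theorem riemann_sum_error_piecewise_C1
    (a b : ℝ) (hab : a < b)
    (S : Finset ℝ) (hS : ↑S ⊆ Set.Icc a b)
    (f f' : ℝ → ℝ) (K K' : ℝ)
    (hint : IntervalIntegrable f MeasureTheory.volume a b)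
    (hK : ∀ x ∈ Set.Icc a b, |f x| ≤ K)
    (hderiv : ∀ x ∈ Set.Icc a b \ ↑S, HasDerivWithinAt f (f' x) (Set.Icc a b) x)
    (hK' : ∀ x ∈ Set.Icc a b \ ↑S, |f' x| ≤ K')
    (M : ℕ) (hM : 0 < M) (t : ℕ → ℝ)
    (ht : ∀ k, 1 ≤ k → k ≤ M →
      t k ∈ Set.Icc (a + ((k : ℝ) - 1) * ((b - a) / M)) (a + (k : ℝ) * ((b - a) / M)) \ ↑S) :
    |(∫ x in a..b, f x) - ∑ k ∈ Finset.range M, f (t (k + 1)) * ((b - a) / M)| ≤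
      1 / 2 * K' * (b - a) ^ 2 / M + 2 * S.card * K * (b - a) / M := by
  have hM0 : (0 : ℝ) < M := by exact_mod_cast hM
  set h : ℝ := (b - a) / M with hh
  have hhpos : 0 < h := by
    apply div_pos (by linarith) hM0
  set x : ℕ → ℝ := fun k => a + k * h with hxdef
  have hxstep : ∀ k : ℕ, x (k + 1) - x k = h := by
    intro k; simp only [hxdef]; push_cast; ring
  have hxlt : ∀ k : ℕ, x k < x (k + 1) := by
    intro k; nlinarith [hxstep k]
  have hxmono : ∀ j k : ℕ, j ≤ k → x j ≤ x k := by
    intro j k hjk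
    have : ∀ n : ℕ, x j ≤ x (j + n) := by
      intro n; induction n with
      | zero => simp
      | succ n ih => exact ih.trans (hxlt (j + n)).le
    have := this (k - j); rwa [Nat.add_sub_cancel' hjk] at this
  have hx0 : x 0 = a := by simp [hxdef]
  have hxM : x M = b := by
    simp only [hxdef, hh]; field_simp; ring
  have hxmem : ∀ k ≤ M, x k ∈ Set.Icc a b := by
    intro k hk
    constructor
    · rw [← hx0]; exact hxmono 0 k (Nat.zero_le k)
    · rw [← hxM]; exact hxmono k M hk
  have htk : ∀ k < M, t (k + 1) ∈ Set.Icc (x k) (x (k + 1)) \ ↑S := by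
    intro k hk
    have := ht (k + 1) (by omega) (by omega)
    have h1 : ((k : ℝ) + 1) - 1 = (k : ℝ) := by ring
    simp only [Nat.cast_add, Nat.cast_one, h1] at this
    simp only [hxdef]; push_cast; exact this
  have htIcc : ∀ k < M, t (k + 1) ∈ Set.Icc a b := by
    intro k hk
    have h1 := (htk k hk).1
    exact ⟨((hxmem k (by omega)).1).trans h1.1, h1.2.trans ((hxmem (k + 1) (by omega)).2)⟩
  -- nonnegativity of K and K'
  have ht1 : t 1 ∈ Set.Icc a b \ ↑S := ⟨htIcc 0 hM, (htk 0 hM).2⟩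
  have hK0 : 0 ≤ K := le_trans (abs_nonneg _) (hK _ ht1.1)
  have hK'0 : 0 ≤ K' := le_trans (abs_nonneg _) (hK' _ ht1)
  -- integrability on subintervals
  have hintk : ∀ k < M, IntervalIntegrable f MeasureTheory.volume (x k) (x (k + 1)) := by
    intro k hk
    apply hint.mono_set
    rw [Set.uIcc_of_le (hxlt k).le, Set.uIcc_of_le hab.le]
    exact Set.Icc_subset_Icc (hxmem k (by omega)).1 (hxmem (k + 1) (by omega)).2
  -- decomposition of the integral
  have hdecomp : (∫ y in a..b, f y) = ∑ k ∈ Finset.range M, ∫ y in x k..x (k + 1), f y := by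
    rw [← hx0, ← hxM]
    exact (intervalIntegral.sum_integral_adjacent_intervals hintk).symm
  -- number of bad points per interval
  set d : ℕ → ℕ := fun k => (S.filter (fun s => s ∈ Set.Ioo (x k) (x (k + 1)))).card with hd
  -- per-interval bound
  have key : ∀ k < M, |(∫ y in x k..x (k + 1), f y) - f (t (k + 1)) * h| ≤
      K' * h ^ 2 / 2 + 2 * K * h * d k := by
    intro k hk
    set u := x k
    set v := x (k + 1)
    set c := t (k + 1)
    have huv : u ≤ v := (hxlt k).le
    have hvu : v - u = h := hxstep k
    have hu : u ∈ Set.Icc a b := hxmem k (by omega)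
    have hv : v ∈ Set.Icc a b := hxmem (k + 1) (by omega)
    have hc : c ∈ Set.Icc u v := (htk k hk).1
    have hcS : c ∉ (S : Set ℝ) := (htk k hk).2
    have hcab : c ∈ Set.Icc a b := htIcc k hk
    -- rewrite as integral of f - f c
    have hconst : f c * h = ∫ y in u..v, f c := by
      rw [intervalIntegral.integral_const, smul_eq_mul, hvu]; ring
    have hint2 : IntervalIntegrable (fun y => f y - f c) MeasureTheory.volume u v :=
      (hintk k hk).sub (intervalIntegrable_const)
    have hrw : (∫ y in u..v, f y) - f c * h = ∫ y in u..v, (f y - f c) := by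
      rw [hconst, ← intervalIntegral.integral_sub (hintk k hk) intervalIntegrable_const]
    rw [hrw]
    -- pointwise a.e. bound
    have hbound_int : IntervalIntegrable (fun y => K' * |y - c| + 2 * K * d k)
        MeasureTheory.volume u v := by
      exact ((continuous_const.mul ((continuous_id.sub continuous_const).abs)).add
        continuous_const).intervalIntegrable _ _
    have hSmeas : MeasureTheory.volume (S : Set ℝ) = 0 := S.finite_toSet.measure_zero _
    have hae : ∀ᵐ y ∂MeasureTheory.volume.restrict (Set.uIoc u v),
        ‖f y - f c‖ ≤ K' * |y - c| + 2 * K * d k := by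
      have h1 : ∀ᵐ y ∂MeasureTheory.volume.restrict (Set.uIoc u v), y ∉ (S : Set ℝ) := by
        exact MeasureTheory.ae_restrict_of_ae (MeasureTheory.measure_eq_zero_iff_ae_notMem.mp hSmeas)
      have h2 : ∀ᵐ y ∂MeasureTheory.volume.restrict (Set.uIoc u v), y ∈ Set.uIoc u v :=
        MeasureTheory.ae_restrict_mem measurableSet_uIoc
      filter_upwards [h1, h2] with y hyS hyI
      rw [Set.uIoc_of_le huv] at hyI
      have hyuv : y ∈ Set.Icc u v := ⟨hyI.1.le, hyI.2⟩
      have hyab : y ∈ Set.Icc a b := ⟨hu.1.trans hyuv.1, hyuv.2.trans hv.2⟩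
      by_cases hgood : ∃ s ∈ (S : Set ℝ), s ∈ Set.uIcc y c
      · -- bad case: some point of S between y and c
        obtain ⟨s, hsS, hsI⟩ := hgood
        have hsy : s ≠ y := fun hh => hyS (hh ▸ hsS)
        have hsc : s ≠ c := fun hh => hcS (hh ▸ hsS)
        have hsmem : s ∈ Set.Ioo u v := by
          rcases Set.mem_uIcc.mp hsI with ⟨h1, h2⟩ | ⟨h1, h2⟩
          · exact ⟨hyI.1.trans (lt_of_le_of_ne h1 (Ne.symm hsy)),
              lt_of_lt_of_le (lt_of_le_of_ne h2 hsc) hc.2⟩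
          · exact ⟨lt_of_le_of_lt hc.1 (lt_of_le_of_ne h1 (Ne.symm hsc)),
              lt_of_lt_of_le (lt_of_le_of_ne h2 hsy) hyuv.2⟩
        have hd1 : 1 ≤ d k := by
          rw [hd]
          exact Finset.card_pos.mpr ⟨s, Finset.mem_filter.mpr ⟨hsS, hsmem⟩⟩
        have h2K : ‖f y - f c‖ ≤ 2 * K := by
          calc ‖f y - f c‖ ≤ |f y| + |f c| := norm_sub_le _ _
          _ ≤ K + K := add_le_add (hK y hyab) (hK c hcab)
          _ = 2 * K := by ring
        have hd1' : (1 : ℝ) ≤ (d k : ℝ) := by exact_mod_cast hd1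
        have h3 : 2 * K ≤ 2 * K * d k := le_mul_of_one_le_right (by positivity) hd1'
        have h4 : 0 ≤ K' * |y - c| := by positivity
        linarith
      · -- good case: MVT
        push_neg at hgood
        have hsub : Set.uIcc y c ⊆ Set.Icc a b :=
          Set.uIcc_subset_Icc hyab hcab
        have hmvt := Convex.norm_image_sub_le_of_norm_hasDerivWithin_le
          (f := f) (f' := f') (s := Set.uIcc y c) (C := K')
          (fun z hz => ((hderiv z ⟨hsub hz, fun hzS => hgood z hzS hz⟩).mono hsub))
          (fun z hz => hK' z ⟨hsub hz, fun hzS => hgood z hzS hz⟩)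
          (convex_uIcc y c) (Set.right_mem_uIcc) (Set.left_mem_uIcc)
        have h2 : (0:ℝ) ≤ 2 * K * d k := by positivity
        calc ‖f y - f c‖ ≤ K' * ‖y - c‖ := hmvt
          _ = K' * |y - c| := by rw [Real.norm_eq_abs]
          _ ≤ K' * |y - c| + 2 * K * d k := by linarith
    have hmain := intervalIntegral.norm_integral_le_abs_of_norm_le hae hbound_int
    rw [Real.norm_eq_abs] at hmain
    refine hmain.trans ?_
    -- compute the integral of the bound
    have hiabs : ∀ p q : ℝ, IntervalIntegrable (fun y => |y - c|) MeasureTheory.volume p q :=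
      fun p q => ((continuous_id.sub continuous_const).abs).intervalIntegrable p q
    have hiid : ∀ p q : ℝ, IntervalIntegrable (fun y : ℝ => y) MeasureTheory.volume p q :=
      fun p q => continuous_id.intervalIntegrable p q
    have habs : (∫ y in u..v, |y - c|) = ((c - u) ^ 2 + (v - c) ^ 2) / 2 := by
      have hi1 := hiabs u c
      have hi2 := hiabs c v
      rw [← intervalIntegral.integral_add_adjacent_intervals hi1 hi2]
      have e1 : (∫ y in u..c, |y - c|) = ∫ y in u..c, (c - y) := by
        apply intervalIntegral.integral_congr
        intro y hy
        rw [Set.uIcc_of_le hc.1] at hy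
        show |y - c| = c - y
        rw [abs_of_nonpos (by linarith [hy.2])]; ring
      have e2 : (∫ y in c..v, |y - c|) = ∫ y in c..v, (y - c) := by
        apply intervalIntegral.integral_congr
        intro y hy
        rw [Set.uIcc_of_le hc.2] at hy
        show |y - c| = y - c
        rw [abs_of_nonneg (by linarith [hy.1])]
      rw [e1, e2]
      rw [intervalIntegral.integral_sub intervalIntegrable_const (hiid u c),
        intervalIntegral.integral_sub (hiid c v) intervalIntegrable_const]
      rw [integral_id, integral_id, intervalIntegral.integral_const,
        intervalIntegral.integral_const]
      simp only [smul_eq_mul]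
      ring
    have hsplit : (∫ y in u..v, (K' * |y - c| + 2 * K * d k)) =
        K' * ((c - u) ^ 2 + (v - c) ^ 2) / 2 + 2 * K * d k * h := by
      rw [intervalIntegral.integral_add ((hiabs u v).const_mul K') intervalIntegrable_const,
        intervalIntegral.integral_const_mul, habs, intervalIntegral.integral_const]
      rw [smul_eq_mul, hvu]
      ring
    rw [hsplit]
    have hq : (c - u) ^ 2 + (v - c) ^ 2 ≤ h ^ 2 := by
      nlinarith [hc.1, hc.2, hvu]
    have h1 : K' * ((c - u) ^ 2 + (v - c) ^ 2) / 2 ≤ K' * h ^ 2 / 2 := half_mul_le_aux hK'0 hq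
    rw [abs_of_nonneg (by positivity)]
    linarith
  -- sum of bad point counts
  have hdsum : (∑ k ∈ Finset.range M, (d k : ℝ)) ≤ (S.card : ℝ) := by
    have hnat : (∑ k ∈ Finset.range M, d k) ≤ S.card := by
      have hdisj : ∀ i ∈ Finset.range M, ∀ j ∈ Finset.range M, i ≠ j →
          Disjoint (S.filter (fun s => s ∈ Set.Ioo (x i) (x (i + 1))))
            (S.filter (fun s => s ∈ Set.Ioo (x j) (x (j + 1)))) := by
        intro i _ j _ hij
        rw [Finset.disjoint_left]
        intro s hs1 hs2
        rw [Finset.mem_filter] at hs1 hs2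
        replace hs1 := hs1.2
        replace hs2 := hs2.2
        rcases Nat.lt_or_ge i j with hlt | hge
        · have : x (i + 1) ≤ x j := hxmono _ _ hlt
          exact absurd (hs1.2.trans_le (this.trans hs2.1.le)) (lt_irrefl s)
        · have hji : j < i := lt_of_le_of_ne hge (Ne.symm hij)
          have : x (j + 1) ≤ x i := hxmono _ _ hji
          exact absurd (hs2.2.trans_le (this.trans hs1.1.le)) (lt_irrefl s)
      calc (∑ k ∈ Finset.range M, d k)
          = ((Finset.range M).biUnion
              (fun k => S.filter (fun s => s ∈ Set.Ioo (x k) (x (k + 1))))).card :=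
            (Finset.card_biUnion hdisj).symm
        _ ≤ S.card := Finset.card_le_card (Finset.biUnion_subset.mpr
            (fun k _ => Finset.filter_subset _ _))
    exact_mod_cast hnat
  -- combine
  have hsum : |(∫ y in a..b, f y) - ∑ k ∈ Finset.range M, f (t (k + 1)) * h| ≤
      ∑ k ∈ Finset.range M, (K' * h ^ 2 / 2 + 2 * K * h * d k) := by
    rw [hdecomp, ← Finset.sum_sub_distrib]
    refine (Finset.abs_sum_le_sum_abs _ _).trans ?_
    apply Finset.sum_le_sum
    intro k hk
    exact key k (Finset.mem_range.mp hk)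
  refine hsum.trans ?_
  rw [Finset.sum_add_distrib, Finset.sum_const, Finset.card_range, ← Finset.mul_sum,
    nsmul_eq_mul]
  have e1 : (M : ℝ) * (K' * h ^ 2 / 2) = 1 / 2 * K' * (b - a) ^ 2 / M := by
    rw [hh]; field_simp
  have e2 : 2 * K * h * (∑ k ∈ Finset.range M, (d k : ℝ)) ≤ 2 * S.card * K * (b - a) / M := by
    have : 2 * K * h * (∑ k ∈ Finset.range M, (d k : ℝ)) ≤ 2 * K * h * S.card := by
      apply mul_le_mul_of_nonneg_left hdsum (by positivity)
    refine this.trans_eq ?_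
    rw [hh]; ring
  rw [e1]; linarith
end

section
/- Let A be a complex N×N matrix, and set 𝑅 = ∑_{m=1}^N max_{1≤n≤N} |A_{mn}| and 𝐶 = ∑_{n=1}^N max_{1≤m≤N} |A_{mn}|. Then the spectral norm of A (the operator norm induced by the Euclidean norm on ℂ^N) satisfies ‖A‖₂ ≤ √(𝐶·𝑅). -/
/-- Schur's lemma: the spectral norm of a complex `N × N` matrix is at most
`√(𝐶·𝑅)`, where `𝑅` (resp. `𝐶`) is the sum over rows (resp. columns) of the
largest modulus of an entry in that row (resp. column) (Lemma 6 of the paper). -/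
theorem schur_spectral_norm_bound (N : ℕ) (A : Matrix (Fin N) (Fin N) ℂ) :
    ∀ x : EuclideanSpace ℂ (Fin N),
      ‖Matrix.toEuclideanLin A x‖ ≤
        Real.sqrt ((∑ n, ⨆ m, ‖A m n‖) * (∑ m, ⨆ n, ‖A m n‖)) * ‖x‖ := by
  intro x
  set c : Fin N → ℝ := fun n => ⨆ m, ‖A m n‖ with hc
  set r : Fin N → ℝ := fun m => ⨆ n, ‖A m n‖ with hr
  have hc0 : ∀ n, 0 ≤ c n := fun n => Real.iSup_nonneg fun m => norm_nonneg _
  have hr0 : ∀ m, 0 ≤ r m := fun m => Real.iSup_nonneg fun n => norm_nonneg _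
  have hC0 : 0 ≤ ∑ n, c n := Finset.sum_nonneg fun n _ => hc0 n
  have hR0 : 0 ≤ ∑ m, r m := Finset.sum_nonneg fun m _ => hr0 m
  have hA : ∀ m n, ‖A m n‖ ≤ Real.sqrt (c n) * Real.sqrt (r m) := by
    intro m n
    rw [← Real.sqrt_mul (hc0 n)]
    have h1 : ‖A m n‖ ≤ c n :=
      le_ciSup (Set.Finite.bddAbove (Set.finite_range fun m => ‖A m n‖)) m
    have h2 : ‖A m n‖ ≤ r m :=
      le_ciSup (Set.Finite.bddAbove (Set.finite_range fun n => ‖A m n‖)) n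
    calc ‖A m n‖ = Real.sqrt (‖A m n‖ * ‖A m n‖) := by
            rw [Real.sqrt_mul_self (norm_nonneg _)]
      _ ≤ Real.sqrt (c n * r m) :=
            Real.sqrt_le_sqrt (mul_le_mul h1 h2 (norm_nonneg _) (hc0 n))
  have hCS : ∑ n, Real.sqrt (c n) * ‖x n‖ ≤ Real.sqrt (∑ n, c n) * ‖x‖ := by
    have h1 := Finset.sum_mul_sq_le_sq_mul_sq Finset.univ
      (fun n => Real.sqrt (c n)) (fun n => ‖x n‖)
    have h2 : (∑ n, Real.sqrt (c n) * ‖x n‖) ^ 2 ≤ (∑ n, c n) * ‖x‖ ^ 2 := by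
      rw [EuclideanSpace.norm_eq,
        Real.sq_sqrt (Finset.sum_nonneg fun i _ => sq_nonneg ‖x i‖)]
      calc (∑ n, Real.sqrt (c n) * ‖x n‖) ^ 2
          ≤ (∑ n, Real.sqrt (c n) ^ 2) * ∑ n, ‖x n‖ ^ 2 := h1
        _ = (∑ n, c n) * ∑ n, ‖x n‖ ^ 2 := by
            congr 1
            exact Finset.sum_congr rfl fun n _ => Real.sq_sqrt (hc0 n)
    calc ∑ n, Real.sqrt (c n) * ‖x n‖
        = Real.sqrt ((∑ n, Real.sqrt (c n) * ‖x n‖) ^ 2) := by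
          rw [Real.sqrt_sq (Finset.sum_nonneg fun n _ =>
            mul_nonneg (Real.sqrt_nonneg _) (norm_nonneg _))]
      _ ≤ Real.sqrt ((∑ n, c n) * ‖x‖ ^ 2) := Real.sqrt_le_sqrt h2
      _ = Real.sqrt (∑ n, c n) * ‖x‖ := by
          rw [Real.sqrt_mul hC0, Real.sqrt_sq (norm_nonneg _)]
  have hax : ‖Matrix.toEuclideanLin A x‖
      = Real.sqrt (∑ m, ‖∑ n, A m n * x n‖ ^ 2) := by
    rw [EuclideanSpace.norm_eq]
    simp [Matrix.toEuclideanLin_apply, Matrix.mulVec, dotProduct]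
  have hm : ∀ m, ‖∑ n, A m n * x n‖ ≤ Real.sqrt (r m) * (Real.sqrt (∑ n, c n) * ‖x‖) := by
    intro m
    calc ‖∑ n, A m n * x n‖ ≤ ∑ n, ‖A m n * x n‖ := norm_sum_le _ _
      _ = ∑ n, ‖A m n‖ * ‖x n‖ := by simp [norm_mul]
      _ ≤ ∑ n, (Real.sqrt (c n) * Real.sqrt (r m)) * ‖x n‖ :=
          Finset.sum_le_sum fun n _ => mul_le_mul_of_nonneg_right (hA m n) (norm_nonneg _)
      _ = Real.sqrt (r m) * ∑ n, Real.sqrt (c n) * ‖x n‖ := by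
          rw [Finset.mul_sum]; exact Finset.sum_congr rfl fun n _ => by ring
      _ ≤ Real.sqrt (r m) * (Real.sqrt (∑ n, c n) * ‖x‖) :=
          mul_le_mul_of_nonneg_left hCS (Real.sqrt_nonneg _)
  rw [hax]
  calc Real.sqrt (∑ m, ‖∑ n, A m n * x n‖ ^ 2)
      ≤ Real.sqrt (∑ m, (Real.sqrt (r m) * (Real.sqrt (∑ n, c n) * ‖x‖)) ^ 2) :=
        Real.sqrt_le_sqrt (Finset.sum_le_sum fun m _ =>
          pow_le_pow_left₀ (norm_nonneg _) (hm m) 2)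
    _ = Real.sqrt ((∑ n, c n) * (∑ m, r m) * ‖x‖ ^ 2) := by
        congr 1
        have key : ∀ m : Fin N, (Real.sqrt (r m) * (Real.sqrt (∑ n, c n) * ‖x‖)) ^ 2
            = r m * ((∑ n, c n) * ‖x‖ ^ 2) := by
          intro m
          rw [mul_pow, mul_pow, Real.sq_sqrt (hr0 m), Real.sq_sqrt hC0]
        rw [Finset.sum_congr rfl fun m _ => key m, ← Finset.sum_mul]
        ring
    _ = Real.sqrt ((∑ n, c n) * (∑ m, r m)) * ‖x‖ := by
        rw [Real.sqrt_mul (mul_nonneg hC0 hR0), Real.sqrt_sq (norm_nonneg _)]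
end

section
/- The infinite matrix H with entries H_{kℓ} = (1/2)∫_{−1}^1 x^{k+ℓ} dx = (1 + (−1)^{k+ℓ})/(2(k+ℓ+1)), k,ℓ ∈ ℕ₀, defines a bounded operator on ℓ²(ℕ₀) of norm at most π: for all finitely supported x, y : ℕ₀ → ℂ, |∑_{k,ℓ} \bar{y}_k H_{kℓ} x_ℓ| ≤ π ‖x‖_{ℓ²} ‖y‖_{ℓ²}. In particular ‖Ĥ_N‖₂ ≤ π for every N ∈ ℕ, where Ĥ_N is the N×N section of H. -/
open Real Finset

private lemma phi_deriv (a : ℝ) (ha : 0 < a) (u : ℝ) :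
    HasDerivAt (fun u : ℝ => 2 * Real.arctan (u / Real.sqrt a))
      (2 * Real.sqrt a / (a + u ^ 2)) u := by
  have hs : (0:ℝ) < Real.sqrt a := Real.sqrt_pos.2 ha
  have hsq : Real.sqrt a ^ 2 = a := Real.sq_sqrt ha.le
  have h := ((Real.hasDerivAt_arctan (u / Real.sqrt a)).comp u
    ((hasDerivAt_id u).div_const (Real.sqrt a))).const_mul 2
  refine h.congr_deriv ?_
  have h1 : a + u ^ 2 ≠ 0 := by positivity
  field_simp
  nlinarith [hsq, hs]

private lemma step_bound (a : ℝ) (ha : 0 < a) (l : ℕ) :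
    Real.sqrt a / ((a + ((l : ℝ) + 1/2)) * Real.sqrt ((l : ℝ) + 1/2)) ≤
      2 * Real.arctan (Real.sqrt ((l : ℝ) + 1/2) / Real.sqrt a) -
      2 * Real.arctan (Real.sqrt ((l : ℝ) - 1/2) / Real.sqrt a) := by
  have hs : (0:ℝ) < Real.sqrt a := Real.sqrt_pos.2 ha
  set u1 := Real.sqrt ((l : ℝ) - 1/2) with hu1
  set u2 := Real.sqrt ((l : ℝ) + 1/2) with hu2
  have hu2pos : 0 < u2 := Real.sqrt_pos.2 (by positivity)
  have hu2sq : u2 ^ 2 = (l : ℝ) + 1/2 := Real.sq_sqrt (by positivity)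
  have hu1nonneg : 0 ≤ u1 := Real.sqrt_nonneg _
  have h12 : u1 < u2 := by
    rcases Nat.eq_zero_or_pos l with h | h
    · subst h
      have : u1 = 0 := by
        rw [hu1]
        exact Real.sqrt_eq_zero_of_nonpos (by norm_num)
      rw [this]; exact hu2pos
    · have h1 : (1:ℝ) ≤ (l:ℝ) := by exact_mod_cast h
      exact Real.sqrt_lt_sqrt (by linarith) (by linarith)
  have hmul : u1 * u2 ≤ (l : ℝ) := by
    rcases Nat.eq_zero_or_pos l with h | h
    · subst h
      have : u1 = 0 := Real.sqrt_eq_zero_of_nonpos (by norm_num)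
      simp [this]
    · have h1 : (1:ℝ) ≤ (l:ℝ) := by exact_mod_cast h
      have : u1 * u2 = Real.sqrt (((l:ℝ) - 1/2) * ((l:ℝ) + 1/2)) :=
        (Real.sqrt_mul (by linarith) _).symm
      rw [this]
      calc Real.sqrt (((l:ℝ) - 1/2) * ((l:ℝ) + 1/2)) ≤ Real.sqrt ((l:ℝ)^2) :=
            Real.sqrt_le_sqrt (by nlinarith)
        _ = (l:ℝ) := by rw [Real.sqrt_sq (by positivity)]
  obtain ⟨c, hc, hceq⟩ := exists_hasDerivAt_eq_slope
    (fun u : ℝ => 2 * Real.arctan (u / Real.sqrt a))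
    (fun u => 2 * Real.sqrt a / (a + u ^ 2)) h12
    ((continuous_const.mul (Real.continuous_arctan.comp (continuous_id.div_const _))).continuousOn)
    (fun x _ => phi_deriv a ha x)
  have hslope : 2 * Real.arctan (u2 / Real.sqrt a) - 2 * Real.arctan (u1 / Real.sqrt a)
      = (u2 - u1) * (2 * Real.sqrt a / (a + c ^ 2)) := by
    rw [eq_div_iff (ne_of_gt (sub_pos.2 h12))] at hceq
    linarith [hceq, mul_comm (2 * Real.sqrt a / (a + c ^ 2)) (u2 - u1)]
  rw [hslope]
  have hc2 : c ^ 2 < u2 ^ 2 := by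
    have h1 : 0 ≤ c := le_trans hu1nonneg hc.1.le
    nlinarith [hc.2]
  have hden : 0 < a + c ^ 2 := by positivity
  have hden2 : 0 < a + u2 ^ 2 := by positivity
  have key : 1 ≤ (u2 - u1) * (2 * u2) := by nlinarith
  rw [div_le_iff₀ (by positivity)]
  have h1 : (u2 - u1) * (2 * Real.sqrt a / (a + c ^ 2)) ≥
      (u2 - u1) * (2 * Real.sqrt a / (a + u2 ^ 2)) := by
    apply mul_le_mul_of_nonneg_left _ (by linarith)
    apply div_le_div_of_nonneg_left (by positivity) hden (by linarith)
  calc Real.sqrt a = Real.sqrt a * 1 := (mul_one _).symm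
    _ ≤ Real.sqrt a * ((u2 - u1) * (2 * u2)) := by
        apply mul_le_mul_of_nonneg_left key hs.le
    _ = (u2 - u1) * (2 * Real.sqrt a / (a + u2 ^ 2)) * ((a + (↑l + 1/2)) * u2) := by
        rw [← hu2sq]; field_simp
    _ ≤ (u2 - u1) * (2 * Real.sqrt a / (a + c ^ 2)) * ((a + (↑l + 1/2)) * u2) := by
        apply mul_le_mul_of_nonneg_right h1 (by positivity)

private lemma rowsum (k : ℕ) (S : Finset ℕ) :
    ∑ l ∈ S, Real.sqrt ((k:ℝ) + 1/2) / (((k:ℝ) + (l:ℝ) + 1) * Real.sqrt ((l:ℝ) + 1/2)) ≤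
      Real.pi := by
  set a : ℝ := (k:ℝ) + 1/2 with haa
  have ha : 0 < a := by positivity
  obtain ⟨n, hn⟩ := S.exists_nat_subset_range
  have hterm : ∀ l : ℕ, 0 ≤ Real.sqrt a / (((k:ℝ) + (l:ℝ) + 1) * Real.sqrt ((l:ℝ) + 1/2)) := by
    intro l; positivity
  calc ∑ l ∈ S, Real.sqrt a / (((k:ℝ) + (l:ℝ) + 1) * Real.sqrt ((l:ℝ) + 1/2))
      ≤ ∑ l ∈ range n, Real.sqrt a / (((k:ℝ) + (l:ℝ) + 1) * Real.sqrt ((l:ℝ) + 1/2)) :=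
        Finset.sum_le_sum_of_subset_of_nonneg hn (fun l _ _ => hterm l)
    _ ≤ ∑ l ∈ range n, (2 * Real.arctan (Real.sqrt (((l+1:ℕ):ℝ) - 1/2) / Real.sqrt a)
          - 2 * Real.arctan (Real.sqrt ((l:ℝ) - 1/2) / Real.sqrt a)) := by
        apply Finset.sum_le_sum
        intro l _
        have h := step_bound a ha l
        have e1 : a + ((l:ℝ) + 1/2) = (k:ℝ) + (l:ℝ) + 1 := by rw [haa]; ring
        have e2 : (((l+1:ℕ)):ℝ) - 1/2 = (l:ℝ) + 1/2 := by push_cast; ring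
        rw [e2]
        rw [e1] at h
        exact h
    _ = 2 * Real.arctan (Real.sqrt ((n:ℝ) - 1/2) / Real.sqrt a)
          - 2 * Real.arctan (Real.sqrt (((0:ℕ):ℝ) - 1/2) / Real.sqrt a) :=
        Finset.sum_range_sub (fun m => 2 * Real.arctan (Real.sqrt ((m:ℝ) - 1/2) / Real.sqrt a)) n
    _ ≤ Real.pi := by
        have h0 : Real.sqrt (((0:ℕ):ℝ) - 1/2) = 0 := Real.sqrt_eq_zero_of_nonpos (by norm_num)
        rw [h0]
        simp only [zero_div, Real.arctan_zero, mul_zero, sub_zero]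
        have := Real.arctan_lt_pi_div_two (Real.sqrt ((n:ℝ) - 1/2) / Real.sqrt a)
        linarith

private lemma hilbert_ineq (T S : Finset ℕ) (a b : ℕ → ℝ)
    (ha : ∀ k, 0 ≤ a k) (hb : ∀ l, 0 ≤ b l) :
    ∑ k ∈ T, ∑ l ∈ S, a k * b l / ((k:ℝ) + (l:ℝ) + 1) ≤
      Real.pi * Real.sqrt (∑ l ∈ S, b l ^ 2) * Real.sqrt (∑ k ∈ T, a k ^ 2) := by
  set c : ℕ → ℝ := fun m => Real.sqrt ((m:ℝ) + 1/2) with hc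
  have hcpos : ∀ m, 0 < c m := fun m => Real.sqrt_pos.2 (by positivity)
  set f : ℕ × ℕ → ℝ := fun p =>
    a p.1 * Real.sqrt (c p.1 / (((p.1:ℝ) + (p.2:ℝ) + 1) * c p.2)) with hf
  set g : ℕ × ℕ → ℝ := fun p =>
    b p.2 * Real.sqrt (c p.2 / (((p.1:ℝ) + (p.2:ℝ) + 1) * c p.1)) with hg
  have hfg : ∀ p : ℕ × ℕ, f p * g p = a p.1 * b p.2 / ((p.1:ℝ) + (p.2:ℝ) + 1) := by
    intro ⟨k, l⟩
    have hd : (0:ℝ) < (k:ℝ) + (l:ℝ) + 1 := by positivity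
    have : Real.sqrt (c k / (((k:ℝ) + (l:ℝ) + 1) * c l)) *
        Real.sqrt (c l / (((k:ℝ) + (l:ℝ) + 1) * c k)) =
        Real.sqrt ((c k / (((k:ℝ) + (l:ℝ) + 1) * c l)) *
          (c l / (((k:ℝ) + (l:ℝ) + 1) * c k))) :=
      (Real.sqrt_mul (by positivity) _).symm
    simp only [hf, hg]
    rw [mul_mul_mul_comm, this]
    have e : (c k / (((k:ℝ) + (l:ℝ) + 1) * c l)) * (c l / (((k:ℝ) + (l:ℝ) + 1) * c k))
        = (1 / ((k:ℝ) + (l:ℝ) + 1)) ^ 2 := by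
      field_simp [ne_of_gt (hcpos k), ne_of_gt (hcpos l)]
    rw [e, Real.sqrt_sq (by positivity)]
    ring
  have hCS := Finset.sum_mul_sq_le_sq_mul_sq (T ×ˢ S) f g
  have hsum : ∑ k ∈ T, ∑ l ∈ S, a k * b l / ((k:ℝ) + (l:ℝ) + 1)
      = ∑ p ∈ T ×ˢ S, f p * g p := by
    rw [Finset.sum_product]
    exact Finset.sum_congr rfl fun k _ => Finset.sum_congr rfl fun l _ => (hfg (k, l)).symm
  have hfsq : ∑ p ∈ T ×ˢ S, f p ^ 2 ≤ Real.pi * ∑ k ∈ T, a k ^ 2 := by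
    rw [Finset.sum_product]
    calc ∑ k ∈ T, ∑ l ∈ S, f (k, l) ^ 2
        = ∑ k ∈ T, a k ^ 2 * ∑ l ∈ S, c k / (((k:ℝ) + (l:ℝ) + 1) * c l) := by
          refine Finset.sum_congr rfl fun k _ => ?_
          rw [Finset.mul_sum]
          refine Finset.sum_congr rfl fun l _ => ?_
          simp only [hf]
          rw [mul_pow, Real.sq_sqrt (by positivity)]
      _ ≤ ∑ k ∈ T, a k ^ 2 * Real.pi := by
          refine Finset.sum_le_sum fun k _ => ?_
          exact mul_le_mul_of_nonneg_left (rowsum k S) (sq_nonneg _)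
      _ = Real.pi * ∑ k ∈ T, a k ^ 2 := by rw [← Finset.sum_mul]; ring
  have hgsq : ∑ p ∈ T ×ˢ S, g p ^ 2 ≤ Real.pi * ∑ l ∈ S, b l ^ 2 := by
    rw [Finset.sum_product_right]
    calc ∑ l ∈ S, ∑ k ∈ T, g (k, l) ^ 2
        = ∑ l ∈ S, b l ^ 2 * ∑ k ∈ T, c l / (((l:ℝ) + (k:ℝ) + 1) * c k) := by
          refine Finset.sum_congr rfl fun l _ => ?_
          rw [Finset.mul_sum]
          refine Finset.sum_congr rfl fun k _ => ?_
          simp only [hg]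
          rw [mul_pow, Real.sq_sqrt (by positivity)]
          ring_nf
      _ ≤ ∑ l ∈ S, b l ^ 2 * Real.pi := by
          refine Finset.sum_le_sum fun l _ => ?_
          exact mul_le_mul_of_nonneg_left (rowsum l T) (sq_nonneg _)
      _ = Real.pi * ∑ l ∈ S, b l ^ 2 := by rw [← Finset.sum_mul]; ring
  have hLHS_nonneg : 0 ≤ ∑ k ∈ T, ∑ l ∈ S, a k * b l / ((k:ℝ) + (l:ℝ) + 1) := by
    refine Finset.sum_nonneg fun k _ => Finset.sum_nonneg fun l _ => ?_
    exact div_nonneg (mul_nonneg (ha k) (hb l)) (by positivity)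
  have hfsq_nonneg : 0 ≤ ∑ p ∈ T ×ˢ S, f p ^ 2 := Finset.sum_nonneg fun p _ => sq_nonneg _
  have hb2 : 0 ≤ ∑ l ∈ S, b l ^ 2 := Finset.sum_nonneg fun l _ => sq_nonneg _
  have ha2 : 0 ≤ ∑ k ∈ T, a k ^ 2 := Finset.sum_nonneg fun k _ => sq_nonneg _
  have hsq : (∑ k ∈ T, ∑ l ∈ S, a k * b l / ((k:ℝ) + (l:ℝ) + 1)) ^ 2 ≤
      (Real.pi * Real.sqrt (∑ l ∈ S, b l ^ 2) * Real.sqrt (∑ k ∈ T, a k ^ 2)) ^ 2 := by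
    have hπ := Real.pi_pos
    calc (∑ k ∈ T, ∑ l ∈ S, a k * b l / ((k:ℝ) + (l:ℝ) + 1)) ^ 2
        = (∑ p ∈ T ×ˢ S, f p * g p) ^ 2 := by rw [hsum]
      _ ≤ (∑ p ∈ T ×ˢ S, f p ^ 2) * ∑ p ∈ T ×ˢ S, g p ^ 2 := hCS
      _ ≤ (Real.pi * ∑ k ∈ T, a k ^ 2) * (Real.pi * ∑ l ∈ S, b l ^ 2) := by
          apply mul_le_mul hfsq hgsq (Finset.sum_nonneg fun p _ => sq_nonneg _) (by positivity)
      _ = (Real.pi * Real.sqrt (∑ l ∈ S, b l ^ 2) * Real.sqrt (∑ k ∈ T, a k ^ 2)) ^ 2 := by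
          rw [mul_pow, mul_pow, Real.sq_sqrt hb2, Real.sq_sqrt ha2]
          ring
  have h := Real.sqrt_le_sqrt hsq
  rwa [Real.sqrt_sq hLHS_nonneg, Real.sqrt_sq (by positivity)] at h

/-- The entry `H_{kℓ} = (1/2)∫_{-1}^1 x^{k+ℓ} dx` of the infinite EDMD Gram
matrix for monomial observables. -/
noncomputable def HmatEntry (k l : ℕ) : ℝ :=
  1 / 2 * ∫ x in (-1 : ℝ)..1, x ^ (k + l)

private lemma Hmat_formula (k l : ℕ) :
    HmatEntry k l = (1 + (-1 : ℝ) ^ (k + l)) / (2 * ((k:ℝ) + (l:ℝ) + 1)) := by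
  rw [HmatEntry, integral_pow, pow_succ, one_pow]
  have h : ((k:ℝ) + (l:ℝ) + 1) ≠ 0 := by positivity
  push_cast
  field_simp
  ring

private lemma Hmat_abs (k l : ℕ) : |HmatEntry k l| ≤ 1 / ((k:ℝ) + (l:ℝ) + 1) := by
  rw [Hmat_formula]
  have hd : (0:ℝ) < (k:ℝ) + (l:ℝ) + 1 := by positivity
  rcases Nat.even_or_odd (k + l) with h | h
  · rw [h.neg_one_pow, abs_of_nonneg (by positivity)]
    apply le_of_eq
    rw [div_eq_div_iff (by positivity : (2*((k:ℝ)+(l:ℝ)+1)) ≠ 0) (ne_of_gt hd)]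
    ring
  · rw [h.neg_one_pow]
    norm_num
    positivity

private lemma bilinear_bound (T S : Finset ℕ) (y x : ℕ → ℂ) :
    ‖∑ k ∈ T, ∑ l ∈ S, (starRingEnd ℂ) (y k) * (HmatEntry k l : ℂ) * x l‖ ≤
      Real.pi * Real.sqrt (∑ l ∈ S, ‖x l‖ ^ 2) * Real.sqrt (∑ k ∈ T, ‖y k‖ ^ 2) := by
  calc ‖∑ k ∈ T, ∑ l ∈ S, (starRingEnd ℂ) (y k) * (HmatEntry k l : ℂ) * x l‖
      ≤ ∑ k ∈ T, ‖∑ l ∈ S, (starRingEnd ℂ) (y k) * (HmatEntry k l : ℂ) * x l‖ :=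
        norm_sum_le _ _
    _ ≤ ∑ k ∈ T, ∑ l ∈ S, ‖(starRingEnd ℂ) (y k) * (HmatEntry k l : ℂ) * x l‖ :=
        Finset.sum_le_sum fun k _ => norm_sum_le _ _
    _ ≤ ∑ k ∈ T, ∑ l ∈ S, ‖y k‖ * ‖x l‖ / ((k:ℝ) + (l:ℝ) + 1) := by
        refine Finset.sum_le_sum fun k _ => Finset.sum_le_sum fun l _ => ?_
        rw [norm_mul, norm_mul, RCLike.norm_conj]
        have h1 : ‖(HmatEntry k l : ℂ)‖ = |HmatEntry k l| := by
          rw [Complex.norm_real, Real.norm_eq_abs]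
        rw [h1]
        have h2 := Hmat_abs k l
        have hd : (0:ℝ) < (k:ℝ) + (l:ℝ) + 1 := by positivity
        calc ‖y k‖ * |HmatEntry k l| * ‖x l‖
            ≤ ‖y k‖ * (1 / ((k:ℝ) + (l:ℝ) + 1)) * ‖x l‖ := by
              apply mul_le_mul_of_nonneg_right _ (norm_nonneg _)
              exact mul_le_mul_of_nonneg_left h2 (norm_nonneg _)
          _ = ‖y k‖ * ‖x l‖ / ((k:ℝ) + (l:ℝ) + 1) := by ring
    _ ≤ Real.pi * Real.sqrt (∑ l ∈ S, ‖x l‖ ^ 2) * Real.sqrt (∑ k ∈ T, ‖y k‖ ^ 2) :=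
        hilbert_ineq T S (fun k => ‖y k‖) (fun l => ‖x l‖)
          (fun k => norm_nonneg _) (fun l => norm_nonneg _)

private lemma part3_lemma (N : ℕ) (v : EuclideanSpace ℂ (Fin N)) :
    ‖Matrix.toEuclideanLin
        (Matrix.of fun k l : Fin N => (HmatEntry k l : ℂ)) v‖ ≤ Real.pi * ‖v‖ := by
  set M := Matrix.of fun k l : Fin N => (HmatEntry k l : ℂ) with hM
  set w : EuclideanSpace ℂ (Fin N) := Matrix.toEuclideanLin M v with hwdef
  have hwk : ∀ k : Fin N, w k = ∑ l : Fin N, (HmatEntry (k:ℕ) (l:ℕ) : ℂ) * v l := by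
    intro k
    simp [hwdef, hM, Matrix.toEuclideanLin_apply, Matrix.mulVec, dotProduct]
  set y : ℕ → ℂ := fun m => if h : m < N then w ⟨m, h⟩ else 0 with hy
  set x : ℕ → ℂ := fun m => if h : m < N then v ⟨m, h⟩ else 0 with hx
  have hxs : ∑ l ∈ Finset.range N, ‖x l‖ ^ 2 = ∑ l : Fin N, ‖v l‖ ^ 2 := by
    rw [← Fin.sum_univ_eq_sum_range (fun m => ‖x m‖ ^ 2) N]
    exact Finset.sum_congr rfl fun l _ => by simp [hx]
  have hys : ∑ k ∈ Finset.range N, ‖y k‖ ^ 2 = ∑ k : Fin N, ‖w k‖ ^ 2 := by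
    rw [← Fin.sum_univ_eq_sum_range (fun m => ‖y m‖ ^ 2) N]
    exact Finset.sum_congr rfl fun k _ => by simp [hy]
  have hnv : ‖v‖ = Real.sqrt (∑ l : Fin N, ‖v l‖ ^ 2) := EuclideanSpace.norm_eq v
  have hnw : ‖w‖ = Real.sqrt (∑ k : Fin N, ‖w k‖ ^ 2) := EuclideanSpace.norm_eq w
  have hwsq_nonneg : (0:ℝ) ≤ ∑ k : Fin N, ‖w k‖ ^ 2 :=
    Finset.sum_nonneg fun k _ => sq_nonneg _
  have hkey : ∑ k : Fin N, ‖w k‖ ^ 2 ≤ Real.pi * ‖v‖ * ‖w‖ := by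
    have hsum : ((∑ k : Fin N, ‖w k‖ ^ 2 : ℝ) : ℂ)
        = ∑ k ∈ Finset.range N, ∑ l ∈ Finset.range N,
            (starRingEnd ℂ) (y k) * (HmatEntry k l : ℂ) * x l := by
      rw [← Fin.sum_univ_eq_sum_range (fun k => ∑ l ∈ Finset.range N,
            (starRingEnd ℂ) (y k) * (HmatEntry k l : ℂ) * x l) N]
      push_cast
      refine Finset.sum_congr rfl fun k _ => ?_
      rw [← Fin.sum_univ_eq_sum_range (fun l =>
            (starRingEnd ℂ) (y (k:ℕ)) * (HmatEntry (k:ℕ) l : ℂ) * x l) N]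
      have he : ∀ l : Fin N,
          (starRingEnd ℂ) (y (k:ℕ)) * (HmatEntry (k:ℕ) (l:ℕ) : ℂ) * x (l:ℕ)
          = (starRingEnd ℂ) (w k) * ((HmatEntry (k:ℕ) (l:ℕ) : ℂ) * v l) := by
        intro l; simp only [hy, hx, dif_pos k.isLt, dif_pos l.isLt, Fin.eta]; ring
      rw [Finset.sum_congr rfl fun l _ => he l, ← Finset.mul_sum, ← hwk k,
        RCLike.conj_mul]
      norm_cast
    calc ∑ k : Fin N, ‖w k‖ ^ 2
        = ‖((∑ k : Fin N, ‖w k‖ ^ 2 : ℝ) : ℂ)‖ := by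
          rw [Complex.norm_real, Real.norm_eq_abs, abs_of_nonneg hwsq_nonneg]
      _ = ‖∑ k ∈ Finset.range N, ∑ l ∈ Finset.range N,
            (starRingEnd ℂ) (y k) * (HmatEntry k l : ℂ) * x l‖ := by rw [hsum]
      _ ≤ Real.pi * Real.sqrt (∑ l ∈ Finset.range N, ‖x l‖ ^ 2) *
            Real.sqrt (∑ k ∈ Finset.range N, ‖y k‖ ^ 2) :=
          bilinear_bound _ _ y x
      _ = Real.pi * ‖v‖ * ‖w‖ := by rw [hxs, hys, hnv, hnw]
  rcases eq_or_lt_of_le (norm_nonneg w) with h0 | h0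
  · rw [← h0]; positivity
  · have hsq : ‖w‖ ^ 2 = ∑ k : Fin N, ‖w k‖ ^ 2 := by
      rw [hnw, Real.sq_sqrt hwsq_nonneg]
    have hm : ‖w‖ * ‖w‖ ≤ (Real.pi * ‖v‖) * ‖w‖ := by nlinarith [hkey]
    exact le_of_mul_le_mul_right hm h0

/-- The infinite matrix `H` with entries `(1/2)∫_{-1}^1 x^{k+ℓ} dx
= (1+(-1)^{k+ℓ})/(2(k+ℓ+1))` defines a bounded operator on `ℓ²(ℕ₀)` of norm at
most `π`; in particular every `N × N` section has spectral norm at most `π`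
(Lemma 9 of the paper, first part). -/
theorem Hmat_bounded_by_pi :
    (∀ k l : ℕ, HmatEntry k l = (1 + (-1 : ℝ) ^ (k + l)) / (2 * (k + l + 1))) ∧
    (∀ x y : ℕ →₀ ℂ,
      ‖∑ k ∈ y.support, ∑ l ∈ x.support,
          (starRingEnd ℂ) (y k) * (HmatEntry k l : ℂ) * x l‖ ≤
        Real.pi * Real.sqrt (∑ l ∈ x.support, ‖x l‖ ^ 2) *
          Real.sqrt (∑ k ∈ y.support, ‖y k‖ ^ 2)) ∧
    (∀ N : ℕ, ∀ v : EuclideanSpace ℂ (Fin N),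
      ‖Matrix.toEuclideanLin
          (Matrix.of fun k l : Fin N => (HmatEntry k l : ℂ)) v‖ ≤
        Real.pi * ‖v‖) := by
  exact ⟨Hmat_formula, fun x y => bilinear_bound y.support x.support (fun k => y k) (fun l => x l),
    part3_lemma⟩
end
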